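/- In any round t of AdaBoost for which R_{t−1} and S_{t−1} are strictly positive, one has 2·(R_{t−1} − R_t)/R_{t−1} ≥ (S_t − S_{t−1})/S_{t−1}; that is, twice the relative drop in the logarithmic suboptimality dominates the relative growth of the ℓ₁-distance to the set of combinations achieving the target loss. -/

import Mathlib

/-- The exponential loss `L(λ) = (1/m) ∑ᵢ exp(−(Mλ)ᵢ)`. -/
noncomputable def expLoss {m N : ℕ} (M : Matrix (Fin m) (Fin N) ℝ) (lam : Fin N → ℝ) : ℝ :=
  (1 / (m : ℝ)) * ∑ i, Real.exp (-(M.mulVec lam i))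

/-- AdaBoost's distribution `D(i) ∝ exp(−(Mλ)ᵢ)`. -/
noncomputable def wt {m N : ℕ} (M : Matrix (Fin m) (Fin N) ℝ) (lam : Fin N → ℝ) (i : Fin m) : ℝ :=
  Real.exp (-(M.mulVec lam i)) / ∑ i', Real.exp (-(M.mulVec lam i'))

/-- The ℓ₁-norm on `ℝ^N`. -/
noncomputable def l1 {N : ℕ} (v : Fin N → ℝ) : ℝ := ∑ j, |v j|

/-- `lam`, `j`, `r` describe a run of AdaBoost on feature matrix `M`:
`lam 0 = 0`, and at each round the coordinate `j t` of maximal absolute correlation is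
chosen, `r t` is its correlation, and the step is `α_t = ½ ln((1+r_t)/(1−r_t))`. -/
def IsAdaBoost {m N : ℕ} (M : Matrix (Fin m) (Fin N) ℝ)
    (lam : ℕ → Fin N → ℝ) (j : ℕ → Fin N) (r : ℕ → ℝ) : Prop :=
  lam 0 = 0 ∧
  ∀ t : ℕ,
    (∀ j' : Fin N, |∑ i, wt M (lam t) i * M i j'| ≤ |∑ i, wt M (lam t) i * M i (j t)|) ∧
    r t = ∑ i, wt M (lam t) i * M i (j t) ∧
    lam (t + 1) = lam t + Pi.single (j t) ((1 / 2) * Real.log ((1 + r t) / (1 - r t)))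


/-- The logarithmic suboptimality `R(λ) = ln L(λ) − ln L(λ*)` relative to a reference `λ*`. -/
noncomputable def Rlog {m N : ℕ} (M : Matrix (Fin m) (Fin N) ℝ)
    (lamStar lam : Fin N → ℝ) : ℝ :=
  Real.log (expLoss M lam) - Real.log (expLoss M lamStar)

/-- The ℓ₁-distance `S(λ) = inf {‖μ − λ‖₁ : L(μ) ≤ L(λ*)}` from `λ` to the set of
combinations achieving the target loss. -/
noncomputable def Sdist {m N : ℕ} (M : Matrix (Fin m) (Fin N) ℝ)
    (lamStar lam : Fin N → ℝ) : ℝ :=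
  sInf {d : ℝ | ∃ μ : Fin N → ℝ, expLoss M μ ≤ expLoss M lamStar ∧ d = l1 (μ - lam)}


/-!
The edge `δ = |r_t|` is the `ℓ∞`-norm of the gradient of `ln L` at `λ^t`, so convexity of
`ln L` gives `ln L(λ^t) − ln L(μ) ≤ δ‖μ − λ^t‖₁` for every `μ`, hence `R_t ≤ δ S_t`. The step
moves `λ` by `|α_t|` in `ℓ₁`, so `S_{t+1} ≤ S_t + |α_t|`, while the loss bound gives
`R_t − R_{t+1} ≥ −½ ln(1 − δ²)`. Everything then reduces to the scalar inequality
`δ |α_t| ≤ −ln(1 − δ²)`, i.e. `x artanh x ≤ −ln(1 − x²)` on `(−1, 1)`.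
-/

open Real Matrix

/-- Compare the series `x artanh x = ∑ x^(2k+2)/(2k+1)` and `−log(1 − x²) = ∑ x^(2k+2)/(k+1)`
term by term. -/
lemma abs_mul_abs_half_log_div_le_neg_log {x : ℝ} (hx : |x| < 1) :
    |x| * |(1 / 2) * log ((1 + x) / (1 - x))| ≤ -log (1 - x ^ 2) := by
  obtain ⟨hlt, hgt⟩ := abs_lt.mp hx
  have hartanh : HasSum (fun k : ℕ => (x ^ 2) ^ (k + 1) / (2 * k + 1))
      (x * ((1 / 2) * log ((1 + x) / (1 - x)))) := by
    rw [log_div (by linarith) (by linarith), ← mul_assoc, mul_one_div]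
    refine ((hasSum_log_sub_log_of_abs_lt_one hx).mul_left (x / 2)).congr_fun fun k => ?_
    field_simp
    ring
  have hlog : HasSum (fun k : ℕ => (x ^ 2) ^ (k + 1) / (k + 1)) (-log (1 - x ^ 2)) :=
    hasSum_pow_div_log_of_abs_lt_one (by rwa [abs_pow, sq_lt_one_iff_abs_lt_one, abs_abs])
  rw [← abs_mul, abs_of_nonneg (hartanh.nonneg fun k => by positivity)]
  refine hasSum_le (fun k => ?_) hartanh hlog
  gcongr
  linarith [(k.cast_nonneg : (0 : ℝ) ≤ k)]

section L1

variable {N : ℕ}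

lemma l1_nonneg (v : Fin N → ℝ) : 0 ≤ l1 v :=
  Finset.sum_nonneg fun _ _ => abs_nonneg _

lemma l1_sub_le (v w : Fin N → ℝ) : l1 (v - w) ≤ l1 v + l1 w := by
  simp only [l1, ← Finset.sum_add_distrib]
  exact Finset.sum_le_sum fun j _ => abs_sub _ _

lemma l1_single (j : Fin N) (a : ℝ) : l1 (Pi.single j a) = |a| := by
  simp [l1, Pi.single_apply, apply_ite]

lemma dotProduct_le_mul_l1 {w v : Fin N → ℝ} {δ : ℝ} (hw : ∀ j, |w j| ≤ δ) :
    w ⬝ᵥ v ≤ δ * l1 v := by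
  rw [l1, Finset.mul_sum]
  refine Finset.sum_le_sum fun j _ => ?_
  calc w j * v j ≤ |w j| * |v j| := (le_abs_self _).trans (abs_mul _ _).le
    _ ≤ δ * |v j| := by gcongr; exact hw j

end L1

section ExpLoss

variable {m N : ℕ} (M : Matrix (Fin m) (Fin N) ℝ)

lemma sum_exp_neg_mulVec_pos (hm : 0 < m) (v : Fin N → ℝ) :
    0 < ∑ i, exp (-(M *ᵥ v) i) :=
  have : Nonempty (Fin m) := Fin.pos_iff_nonempty.mp hm
  Finset.sum_pos (fun _ _ => exp_pos _) Finset.univ_nonempty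

lemma expLoss_pos (hm : 0 < m) (v : Fin N → ℝ) : 0 < expLoss M v :=
  mul_pos (by positivity) (sum_exp_neg_mulVec_pos M hm v)

lemma wt_nonneg (v : Fin N → ℝ) (i : Fin m) : 0 ≤ wt M v i :=
  div_nonneg (exp_pos _).le (Finset.sum_nonneg fun _ _ => (exp_pos _).le)

lemma sum_wt (hm : 0 < m) (v : Fin N → ℝ) : ∑ i, wt M v i = 1 := by
  simp only [wt, ← Finset.sum_div]
  exact div_self (sum_exp_neg_mulVec_pos M hm v).ne'

lemma sum_wt_mul_exp (hm : 0 < m) (lam v : Fin N → ℝ) :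
    ∑ i, wt M lam i * exp (-(M *ᵥ v) i) = expLoss M (lam + v) / expLoss M lam := by
  simp only [wt, expLoss, div_mul_eq_mul_div, ← exp_add, ← Finset.sum_div, mulVec_add, Pi.add_apply,
    neg_add, one_mul, div_div_div_cancel_right₀ (Nat.cast_ne_zero.mpr hm.ne' : (m : ℝ) ≠ 0)]

/-- Jensen's inequality for `exp` with the weights `wt M lam`: the gradient inequality for the
convex function `log L`, whose gradient at `lam` is `-(wt M lam ᵥ* M)`. -/
lemma log_expLoss_sub_le (hm : 0 < m) (lam μ : Fin N → ℝ) :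
    log (expLoss M lam) - log (expLoss M μ) ≤ wt M lam ⬝ᵥ (M *ᵥ (μ - lam)) := by
  have hjensen := convexOn_exp.map_sum_le (t := Finset.univ) (w := wt M lam)
    (p := fun i => -(M *ᵥ (μ - lam)) i) (fun i _ => wt_nonneg M lam i) (sum_wt M hm lam)
    (fun i _ => Set.mem_univ _)
  simp only [smul_eq_mul, sum_wt_mul_exp M hm, add_sub_cancel, mul_neg, Finset.sum_neg_distrib]
    at hjensen
  have := (le_log_iff_exp_le (div_pos (expLoss_pos M hm μ) (expLoss_pos M hm lam))).mpr hjensen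
  rw [log_div (expLoss_pos M hm μ).ne' (expLoss_pos M hm lam).ne'] at this
  rw [dotProduct]
  linarith

lemma log_expLoss_sub_le_mul_l1 (hm : 0 < m) {lam : Fin N → ℝ} {δ : ℝ}
    (hδ : ∀ j, |(wt M lam ᵥ* M) j| ≤ δ) (μ : Fin N → ℝ) :
    log (expLoss M lam) - log (expLoss M μ) ≤ δ * l1 (μ - lam) :=
  (log_expLoss_sub_le M hm lam μ).trans <| by
    rw [dotProduct_mulVec]
    exact dotProduct_le_mul_l1 hδ

end ExpLoss

section Suboptimality

variable {m N : ℕ} {M : Matrix (Fin m) (Fin N) ℝ} {lamStar : Fin N → ℝ}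

lemma Sdist_le {μ : Fin N → ℝ} (hμ : expLoss M μ ≤ expLoss M lamStar) (lam : Fin N → ℝ) :
    Sdist M lamStar lam ≤ l1 (μ - lam) :=
  csInf_le ⟨0, by rintro d ⟨ν, -, rfl⟩; exact l1_nonneg _⟩ ⟨μ, hμ, rfl⟩

lemma le_Sdist {lam : Fin N → ℝ} {c : ℝ}
    (h : ∀ μ, expLoss M μ ≤ expLoss M lamStar → c ≤ l1 (μ - lam)) :
    c ≤ Sdist M lamStar lam :=
  le_csInf ⟨_, lamStar, le_rfl, rfl⟩ (by rintro d ⟨μ, hμ, rfl⟩; exact h μ hμ)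

lemma Sdist_le_add_l1 (lam lam' : Fin N → ℝ) :
    Sdist M lamStar lam' ≤ Sdist M lamStar lam + l1 (lam' - lam) := by
  rw [← sub_le_iff_le_add]
  refine le_Sdist fun μ hμ => sub_le_iff_le_add.mpr ?_
  calc Sdist M lamStar lam' ≤ l1 (μ - lam') := Sdist_le hμ lam'
    _ = l1 (μ - lam - (lam' - lam)) := by rw [sub_sub_sub_cancel_right]
    _ ≤ l1 (μ - lam) + l1 (lam' - lam) := l1_sub_le _ _

lemma Rlog_le_mul_Sdist (hm : 0 < m) {lam : Fin N → ℝ} {δ : ℝ} (hδ0 : 0 ≤ δ)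
    (hδ : ∀ j, |(wt M lam ᵥ* M) j| ≤ δ) :
    Rlog M lamStar lam ≤ δ * Sdist M lamStar lam := by
  have key : ∀ μ, expLoss M μ ≤ expLoss M lamStar → Rlog M lamStar lam ≤ δ * l1 (μ - lam) := by
    intro μ hμ
    have := log_le_log (expLoss_pos M hm μ) hμ
    have := log_expLoss_sub_le_mul_l1 M hm hδ μ
    rw [Rlog]
    linarith
  rcases hδ0.eq_or_lt with rfl | hδpos
  · simpa using key lamStar le_rfl
  · rw [← div_le_iff₀' hδpos]
    exact le_Sdist fun μ hμ => (div_le_iff₀' hδpos).mpr (key μ hμ)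

lemma Rlog_le_add_of_expLoss_le_mul_sqrt (hm : 0 < m) {lam lam' : Fin N → ℝ} {c : ℝ}
    (hc : 0 < c) (h : expLoss M lam' ≤ expLoss M lam * √c) :
    Rlog M lamStar lam' ≤ Rlog M lamStar lam + log c / 2 := by
  have := log_le_log (expLoss_pos M hm lam') h
  rw [log_mul (expLoss_pos M hm lam).ne' (sqrt_pos.mpr hc).ne', log_sqrt hc.le] at this
  simp only [Rlog]
  linarith

end Suboptimality

theorem adaboost_relative_drop_dominates_general {m N : ℕ} (hm : 0 < m)
    (M : Matrix (Fin m) (Fin N) ℝ)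
    (lam : ℕ → Fin N → ℝ) (j : ℕ → Fin N) (r : ℕ → ℝ)
    (hAda : IsAdaBoost M lam j r)
    (hdrop : ∀ t : ℕ,
      expLoss M (lam (t + 1)) ≤ expLoss M (lam t) * Real.sqrt (1 - r t ^ 2))
    (lamStar : Fin N → ℝ) (t : ℕ)
    (hR : 0 < Rlog M lamStar (lam t)) (hS : 0 < Sdist M lamStar (lam t)) :
    (Sdist M lamStar (lam (t + 1)) - Sdist M lamStar (lam t)) / Sdist M lamStar (lam t) ≤
      2 * (Rlog M lamStar (lam t) - Rlog M lamStar (lam (t + 1))) / Rlog M lamStar (lam t) := by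
  obtain ⟨hmax, hr, hstep⟩ := hAda.2 t
  set α := (1 / 2) * log ((1 + r t) / (1 - r t))
  have hedge : ∀ j', |(wt M (lam t) ᵥ* M) j'| ≤ |r t| := fun j' => hr ▸ hmax j'
  have hsq : 0 < 1 - r t ^ 2 := sqrt_pos.mp <| pos_of_mul_pos_right
    ((expLoss_pos M hm _).trans_le (hdrop t)) (expLoss_pos M hm _).le
  have hRS : Rlog M lamStar (lam t) ≤ |r t| * Sdist M lamStar (lam t) :=
    Rlog_le_mul_Sdist hm (abs_nonneg _) hedge
  have hSstep : Sdist M lamStar (lam (t + 1)) ≤ Sdist M lamStar (lam t) + |α| := by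
    simpa [hstep, l1_single] using Sdist_le_add_l1 (lamStar := lamStar) (lam t) (lam (t + 1))
  have hRdrop := Rlog_le_add_of_expLoss_le_mul_sqrt (lamStar := lamStar) hm hsq (hdrop t)
  have hscalar : |r t| * |α| ≤ -log (1 - r t ^ 2) :=
    abs_mul_abs_half_log_div_le_neg_log ((sq_lt_one_iff_abs_lt_one _).mp (by linarith))
  rw [div_le_div_iff₀ hS hR]
  calc (Sdist M lamStar (lam (t + 1)) - Sdist M lamStar (lam t)) * Rlog M lamStar (lam t)
      ≤ |α| * (|r t| * Sdist M lamStar (lam t)) :=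
        mul_le_mul (by linarith) hRS hR.le (abs_nonneg _)
    _ = |r t| * |α| * Sdist M lamStar (lam t) := by ring
    _ ≤ 2 * (Rlog M lamStar (lam t) - Rlog M lamStar (lam (t + 1))) * Sdist M lamStar (lam t) :=
        mul_le_mul_of_nonneg_right (by linarith) hS.le

/-- In any round `t` of AdaBoost with `R_{t−1} > 0` and `S_{t−1} > 0`,
`2·(R_{t−1} − R_t)/R_{t−1} ≥ (S_t − S_{t−1})/S_{t−1}`.
(Round `t` is the step from `lam t` to `lam (t+1)`.) -/
theorem adaboost_relative_drop_dominates {m N : ℕ} (hm : 0 < m)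
    (M : Matrix (Fin m) (Fin N) ℝ) (hM : ∀ i j, |M i j| ≤ 1)
    (lam : ℕ → Fin N → ℝ) (j : ℕ → Fin N) (r : ℕ → ℝ)
    (hAda : IsAdaBoost M lam j r)
    (hdrop : ∀ t : ℕ,
      expLoss M (lam (t + 1)) ≤ expLoss M (lam t) * Real.sqrt (1 - r t ^ 2))
    (lamStar : Fin N → ℝ) (t : ℕ)
    (hR : 0 < Rlog M lamStar (lam t)) (hS : 0 < Sdist M lamStar (lam t)) :
    (Sdist M lamStar (lam (t + 1)) - Sdist M lamStar (lam t)) / Sdist M lamStar (lam t) ≤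
      2 * (Rlog M lamStar (lam t) - Rlog M lamStar (lam (t + 1))) / Rlog M lamStar (lam t) :=
  adaboost_relative_drop_dominates_general hm M lam j r hAda hdrop lamStar t hR hS
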